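/- Let S be a commutative ring, g_0,...,g_d ∈ S with d = l (full index sequence), and U' = S[W_1,...,W_d]. Let φ : U' → U/J be the natural map, where U = S[X_0,X_1,W_1,...,W_d] and J = (X_1 W_1 + g_0, X_1 W_{k+1} + g_k - X_0 W_k (1 ≤ k ≤ d-1), g_d - X_0 W_d). Then for all 0 ≤ k < k' < k'' ≤ d, φ kills the Plücker-type element g_k(W_{k'+1}W_{k''} - W_{k'}W_{k''+1}) - g_{k'}(W_{k+1}W_{k''} - W_k W_{k''+1}) + g_{k''}(W_{k+1}W_{k'} - W_k W_{k'+1}) (convention W_0 = W_{d+1} = 0): i.e. this element lies in J ∩ U'. -/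
import Mathlib


open MvPolynomial

set_option synthInstance.maxHeartbeats 1000000
set_option maxHeartbeats 1000000

/-- Let `S` be a commutative ring, `g_0, …, g_d ∈ S` (full index
sequence, `l = d`), `U = S[X₀, X₁, W₁, …, W_d]` and
`J = (X₁ W₁ + g_0, X₁ W_{k+1} + g_k - X₀ W_k (1 ≤ k ≤ d-1), g_d - X₀ W_d)` (convention
`W_0 = W_{d+1} = 0`).  Then the natural map `φ : S[W₁, …, W_d] → U/J` kills the
Plücker-type elements
`g_k(W_{k'+1}W_{k''} - W_{k'}W_{k''+1}) - g_{k'}(W_{k+1}W_{k''} - W_k W_{k''+1})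
 + g_{k''}(W_{k+1}W_{k'} - W_k W_{k'+1})`
for all `0 ≤ k < k' < k'' ≤ d`; i.e. these elements of the subring `S[W₁, …, W_d]`
lie in `J`. -/
theorem stmt_16 (S : Type*) [CommRing S] (d : ℕ) (hd : 1 ≤ d) (g : ℕ → S) :
    let U := MvPolynomial (Fin 2 ⊕ Fin d) S
    let X0 : U := X (Sum.inl 0)
    let X1 : U := X (Sum.inl 1)
    let W : ℕ → U := fun m =>
      if h : 1 ≤ m ∧ m ≤ d then X (Sum.inr ⟨m - 1, by omega⟩) else 0
    let J : Ideal U := Ideal.span {p : U | ∃ j ≤ d, p = X1 * W (j + 1) + C (g j) - X0 * W j}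
    ∀ k k' k'' : ℕ, k < k' → k' < k'' → k'' ≤ d →
      Ideal.Quotient.mk J
        (C (g k) * (W (k' + 1) * W k'' - W k' * W (k'' + 1)) -
          C (g k') * (W (k + 1) * W k'' - W k * W (k'' + 1)) +
          C (g k'') * (W (k + 1) * W k' - W k * W (k' + 1))) = 0 := by
  intro U X0 X1 W J k k' k'' h1 h2 h3
  rw [Ideal.Quotient.eq_zero_iff_mem]
  have hf : ∀ j, j ≤ d → X1 * W (j + 1) + C (g j) - X0 * W j ∈ J := fun j hj =>
    Ideal.subset_span ⟨j, hj, rfl⟩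
  have hk := hf k (by omega)
  have hk' := hf k' (by omega)
  have hk'' := hf k'' h3
  have key :
      C (g k) * (W (k' + 1) * W k'' - W k' * W (k'' + 1)) -
        C (g k') * (W (k + 1) * W k'' - W k * W (k'' + 1)) +
        C (g k'') * (W (k + 1) * W k' - W k * W (k' + 1)) =
      (X1 * W (k + 1) + C (g k) - X0 * W k) * (W (k' + 1) * W k'' - W k' * W (k'' + 1)) -
        (X1 * W (k' + 1) + C (g k') - X0 * W k') * (W (k + 1) * W k'' - W k * W (k'' + 1)) +
        (X1 * W (k'' + 1) + C (g k'') - X0 * W k'') * (W (k + 1) * W k' - W k * W (k' + 1)) := by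
    ring
  rw [key]
  exact add_mem (sub_mem (Ideal.mul_mem_right _ _ hk) (Ideal.mul_mem_right _ _ hk'))
    (Ideal.mul_mem_right _ _ hk'')
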